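/- Contiguous relation for monic q-Hahn polynomials in α: for n ≥ 1 and nonnegative integer N, Q̃_n(x̄; α/q, β, N | q) = Q̃_n(x̄; α, β, N | q) + [α (q^n − 1)(β q^n − 1)(q^n − q^{N+1}) / (q^N (αβ q^{2n} − 1)(αβ q^{2n} − q))] · Q̃_{n−1}(x̄; α, β, N | q), as an identity of polynomials in x̄ (assuming the denominators are nonzero). -/

import Mathlib

/-- The q-Pochhammer symbol `(a; q)_m`. -/
noncomputable def qPoch (q a : ℝ) (m : ℕ) : ℝ := ∏ j ∈ Finset.range m, (1 - a * q ^ j)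

/-- The monic q-Hahn polynomial (as a function of `x̄ = q^{-x}`):
`Q̃_n(x̄; α, β, N | q) = ((αq;q)_n (q^{-N};q)_n / (αβq^{n+1};q)_n) ₃φ₂(q^{-n}, αβq^{n+1}, x̄; αq, q^{-N}; q, q)`. -/
noncomputable def qHahn (q α β : ℝ) (N n : ℕ) (xb : ℝ) : ℝ :=
  (qPoch q (α * q) n * qPoch q (q ^ (-(N : ℤ))) n / qPoch q (α * β * q ^ (n + 1)) n) *
    ∑ m ∈ Finset.range (n + 1),
      qPoch q (q ^ (-(n : ℤ))) m * qPoch q (α * β * q ^ (n + 1)) m * qPoch q xb m * q ^ m /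
        (qPoch q (α * q) m * qPoch q (q ^ (-(N : ℤ))) m * qPoch q q m)

/-!
Expand `Q̃_n` in the basis `(x̄;q)_m`. Shifting the base point of each q-Pochhammer symbol by one
factor shows that the `m`-th coefficients of `Q̃_n(·; α/q)` and of `Q̃_{n-1}(·; α)` are explicit
rational multiples of the `m`-th coefficient of `Q̃_n(·; α)`, so the relation reduces, coefficient
by coefficient, to one identity between rational functions of `q^m`. The sum for `Q̃_{n-1}` may be
extended to `m = n` because `(q^{1-n};q)_n` contains the factor `1 - q^{1-n} q^{n-1} = 0`.
-/

open Finset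

section qPoch

variable (q a : ℝ) (m : ℕ)

lemma qPoch_succ : qPoch q a (m + 1) = qPoch q a m * (1 - a * q ^ m) :=
  prod_range_succ _ _

lemma one_sub_mul_qPoch_mul : (1 - a) * qPoch q (a * q) m = qPoch q a m * (1 - a * q ^ m) := by
  induction m with
  | zero => simp [qPoch]
  | succ k ih =>
    rw [qPoch_succ, qPoch_succ, ← mul_assoc, ih, pow_succ]
    ring

variable {q a m}

lemma qPoch_ne_zero (h : ∀ j < m, a * q ^ j ≠ 1) : qPoch q a m ≠ 0 :=
  prod_ne_zero_iff.mpr fun j hj hz => h j (mem_range.mp hj) (by linarith)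

lemma qPoch_zpow_neg_eq_zero {k : ℕ} (hq : q ≠ 0) (hkm : k < m) :
    qPoch q (q ^ (-(k : ℤ))) m = 0 :=
  prod_eq_zero (mem_range.mpr hkm) <| by
    rw [zpow_neg, zpow_natCast, inv_mul_cancel₀ (pow_ne_zero k hq), sub_self]

lemma qPoch_div_qPoch (n : ℕ) (ha : ∀ j, a * q ^ j ≠ 1) :
    qPoch q a n / qPoch q a m
      = qPoch q (a * q) n / qPoch q (a * q) m * ((1 - a * q ^ m) / (1 - a * q ^ n)) := by
  have h1 : ∀ j, 1 - a * q ^ j ≠ 0 := fun j => sub_ne_zero.mpr (ha j).symm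
  have hm : qPoch q (a * q) m ≠ 0 :=
    qPoch_ne_zero fun j _ => by rw [mul_assoc, ← pow_succ']; exact ha (j + 1)
  have hshift : ∀ k, qPoch q a k = (1 - a) * qPoch q (a * q) k / (1 - a * q ^ k) := fun k =>
    (eq_div_iff (h1 k)).mpr (one_sub_mul_qPoch_mul q a k).symm
  have h0 : 1 - a ≠ 0 := by simpa using h1 0
  rw [hshift n, hshift m]
  field_simp

end qPoch

noncomputable def qHahnCoeff (q α β : ℝ) (N n m : ℕ) : ℝ :=
  qPoch q (α * q) n / qPoch q (α * q) m *
    (qPoch q (q ^ (-(N : ℤ))) n / qPoch q (q ^ (-(N : ℤ))) m) *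
    (qPoch q (α * β * q ^ (n + 1)) m / qPoch q (α * β * q ^ (n + 1)) n) *
    (qPoch q (q ^ (-(n : ℤ))) m * q ^ m / qPoch q q m)

noncomputable def qHahnCoeffRatio (q α β : ℝ) (N k m : ℕ) : ℝ :=
  q ^ N * (1 - α * β * q ^ (2 * k + 1)) * (1 - α * β * q ^ (2 * (k + 1))) * (q ^ (k + 1) - q ^ m) /
    ((1 - α * q ^ (k + 1)) * (q ^ N - q ^ k) * (1 - α * β * q ^ (k + 1 + m)) * (q ^ (k + 1) - 1))

section qHahnCoeff

variable {q α β : ℝ} {N : ℕ}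

lemma qHahn_eq_sum_qHahnCoeff (n : ℕ) (xb : ℝ) :
    qHahn q α β N n xb = ∑ m ∈ range (n + 1), qHahnCoeff q α β N n m * qPoch q xb m := by
  rw [qHahn, mul_sum]
  refine sum_congr rfl fun m _ => ?_
  rw [qHahnCoeff]
  ring

lemma qHahn_eq_sum_range_add_two (hq : q ≠ 0) (n : ℕ) (xb : ℝ) :
    qHahn q α β N n xb = ∑ m ∈ range (n + 2), qHahnCoeff q α β N n m * qPoch q xb m := by
  rw [qHahn_eq_sum_qHahnCoeff, sum_range_succ _ (n + 1), qHahnCoeff,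
    qPoch_zpow_neg_eq_zero hq n.lt_succ_self]
  simp

lemma qHahnCoeff_div_q (hq : q ≠ 0) (hα : ∀ j, α * q ^ j ≠ 1) (hαβ : ∀ j, α * β * q ^ j ≠ 1)
    (n m : ℕ) :
    qHahnCoeff q (α / q) β N n m
      = qHahnCoeff q α β N n m *
        ((1 - α * q ^ m) / (1 - α * q ^ n) *
          ((1 - α * β * q ^ (2 * n)) / (1 - α * β * q ^ (n + m)))) := by
  have hb : ∀ j, α * β * q ^ n * q ^ j ≠ 1 := fun j => by
    rw [mul_assoc _ (q ^ n), ← pow_add]; exact hαβ _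
  have hb' : α / q * β * q ^ (n + 1) = α * β * q ^ n := by field_simp; ring
  rw [qHahnCoeff, qHahnCoeff, div_mul_cancel₀ α hq, hb', qPoch_div_qPoch n hα,
    qPoch_div_qPoch m hb, mul_assoc _ (q ^ n) q, ← pow_succ]
  ring

lemma qHahnCoeff_eq_qHahnCoeff_succ_mul_ratio {k : ℕ} (hq : q ≠ 0) (hα : α * q ^ (k + 1) ≠ 1)
    (hαβ : ∀ j, α * β * q ^ j ≠ 1) (hkN : q ^ k ≠ q ^ N) (hk : q ^ (k + 1) ≠ 1) (m : ℕ) :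
    qHahnCoeff q α β N k m = qHahnCoeff q α β N (k + 1) m * qHahnCoeffRatio q α β N k m := by
  have hb : ∀ j, α * β * q ^ (k + 1) * q ^ j ≠ 1 := fun j => by
    rw [mul_assoc _ (q ^ (k + 1)), ← pow_add]; exact hαβ _
  have hc0 : 1 - (q ^ (k + 1))⁻¹ ≠ 0 := sub_ne_zero.mpr fun h => hk (inv_eq_one.mp h.symm)
  have hc : qPoch q (q ^ k)⁻¹ m
      = qPoch q (q ^ (k + 1))⁻¹ m * (1 - (q ^ (k + 1))⁻¹ * q ^ m) / (1 - (q ^ (k + 1))⁻¹) := by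
    rw [eq_div_iff hc0, show (q ^ k)⁻¹ = (q ^ (k + 1))⁻¹ * q by field_simp; ring, mul_comm,
      one_sub_mul_qPoch_mul]
  -- the factors by which the four quotients in `qHahnCoeff` change when `k + 1` is lowered to `k`
  have hs : (1 - α * β * q ^ (2 * k + 1)) / (1 - α * β * q ^ (k + 1 + m)) *
        ((1 - (q ^ (k + 1))⁻¹ * q ^ m) / (1 - (q ^ (k + 1))⁻¹))
      = (1 - α * q ^ (k + 1)) * (1 - (q ^ N)⁻¹ * q ^ k) / (1 - α * β * q ^ (2 * (k + 1))) *
        qHahnCoeffRatio q α β N k m := by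
    have := sub_ne_zero.mpr hkN.symm
    have := sub_ne_zero.mpr hk
    have := sub_ne_zero.mpr hα.symm
    have := sub_ne_zero.mpr (hαβ (k + 1 + m)).symm
    have := sub_ne_zero.mpr (hαβ (2 * (k + 1))).symm
    rw [qHahnCoeffRatio]
    field_simp
  rw [qHahnCoeff, qHahnCoeff]
  simp only [zpow_neg, zpow_natCast]
  rw [qPoch_succ q (α * q) k, qPoch_succ q (q ^ N)⁻¹ k, qPoch_div_qPoch (m := k) m hb,
    show α * β * q ^ (k + 1) * q = α * β * q ^ (k + 1 + 1) by ring,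
    qPoch_succ q (α * β * q ^ (k + 1 + 1)) k, hc]
  simp only [div_eq_mul_inv, mul_inv] at hs ⊢
  linear_combination qPoch q (α * q) k / qPoch q (α * q) m *
    (qPoch q (q ^ N)⁻¹ k / qPoch q (q ^ N)⁻¹ m) *
    (qPoch q (α * β * q ^ (k + 1 + 1)) m / qPoch q (α * β * q ^ (k + 1 + 1)) k) *
    (qPoch q (q ^ (k + 1))⁻¹ m * q ^ m / qPoch q q m) * hs

lemma qHahnCoeffRatio_contiguity {k : ℕ} (m : ℕ) (hq : q ≠ 0) (hα : α * q ^ (k + 1) ≠ 1)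
    (hαβ : ∀ j, α * β * q ^ j ≠ 1) (hkN : q ^ k ≠ q ^ N) (hk : q ^ (k + 1) ≠ 1) :
    (1 - α * q ^ m) / (1 - α * q ^ (k + 1)) *
        ((1 - α * β * q ^ (2 * (k + 1))) / (1 - α * β * q ^ (k + 1 + m)))
      = 1 + α * (q ^ (k + 1) - 1) * (β * q ^ (k + 1) - 1) * (q ^ (k + 1) - q ^ (N + 1)) /
            (q ^ N * (α * β * q ^ (2 * (k + 1)) - 1) * (α * β * q ^ (2 * (k + 1)) - q)) *
          qHahnCoeffRatio q α β N k m := by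
  have := sub_ne_zero.mpr hkN.symm
  have := sub_ne_zero.mpr hk
  have := sub_ne_zero.mpr hα.symm
  have := sub_ne_zero.mpr (hαβ (k + 1 + m)).symm
  have := sub_ne_zero.mpr (hαβ (2 * (k + 1)))
  have : α * β * q ^ (2 * (k + 1)) - q ≠ 0 := by
    rw [show α * β * q ^ (2 * (k + 1)) - q = q * (α * β * q ^ (2 * k + 1) - 1) by ring]
    exact mul_ne_zero hq (sub_ne_zero.mpr (hαβ _))
  rw [qHahnCoeffRatio]
  field_simp
  ring

end qHahnCoeff

/-- Contiguous relation for monic q-Hahn polynomials in α. -/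
theorem qHahn_shift_alpha (q α β : ℝ) (N n : ℕ)
    (hq : 0 < q) (hq1 : q < 1) (hn : 1 ≤ n) (hnN : n ≤ N)
    (hα : ∀ m : ℕ, α * q ^ m ≠ 1) (hαβ : ∀ m : ℕ, α * β * q ^ m ≠ 1) :
    ∀ xb : ℝ,
      qHahn q (α / q) β N n xb
        = qHahn q α β N n xb
          + (α * (q ^ n - 1) * (β * q ^ n - 1) * (q ^ n - q ^ (N + 1)) /
              (q ^ N * (α * β * q ^ (2 * n) - 1) * (α * β * q ^ (2 * n) - q))) *
            qHahn q α β N (n - 1) xb := by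
  obtain ⟨k, rfl⟩ : ∃ k, n = k + 1 := ⟨n - 1, by omega⟩
  intro xb
  have hq0 : q ≠ 0 := hq.ne'
  have hkN : q ^ k ≠ q ^ N := (pow_lt_pow_right_of_lt_one₀ hq hq1 (by omega)).ne'
  have hk : q ^ (k + 1) ≠ 1 := (pow_lt_one₀ hq.le hq1 k.succ_ne_zero).ne
  rw [qHahn_eq_sum_qHahnCoeff, qHahn_eq_sum_qHahnCoeff, Nat.add_sub_cancel,
    qHahn_eq_sum_range_add_two hq0, mul_sum, ← sum_add_distrib]
  refine sum_congr rfl fun m _ => ?_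
  rw [qHahnCoeff_div_q hq0 hα hαβ, qHahnCoeff_eq_qHahnCoeff_succ_mul_ratio hq0 (hα _) hαβ hkN hk,
    qHahnCoeffRatio_contiguity m hq0 (hα _) hαβ hkN hk]
  ring
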